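/- Let f : ℝ^d → ℝ be m-strongly convex, ℓ-smooth, minimized at 0 with f(0) = 0. Fix τ, z, h ∈ ℝ^d, λ₁, λ₂ > 0, w ∈ ℕ, and let x(u) = argmin_x [ ‖(x+h)/(w+1) − τ‖² + λ₁ f(x − u) + λ₂‖x − z‖² ]. Then the map u ↦ x(u) is (λ₁ℓ/η)-Lipschitz, where η = 2/(w+1)² + mλ₁ + 2λ₂, and since mλ₁ < η we have λ₁ℓ/η < ℓ/m when ℓ and constants satisfy λ₁ℓ < (ℓ/m)η; in particular ‖x(u₁) − x(u₂)‖ ≤ (λ₁ℓ/η)‖u₁ − u₂‖ for all u₁, u₂. -/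

import Mathlib

/-!
For each `u` the objective `x ↦ obj u x` is `η`-strongly convex, so its minimiser `x(u)`
satisfies the quadratic growth bound `obj u x(u) + η/2 ‖y - x(u)‖² ≤ obj u y`. Adding these
bounds for `u₁` and `u₂` gives `η ‖x(u₁) - x(u₂)‖² ≤ λ₁ (g x(u₂) - g x(u₁))` with
`g x = f (x - u₁) - f (x - u₂)`, and `g` is `ℓ ‖u₁ - u₂‖`-Lipschitz because `∇f` is `ℓ`-Lipschitz.
-/

open Set Filter Topology

section StrongConvexity

variable {E : Type*} [NormedAddCommGroup E] [NormedSpace ℝ E] {s : Set E} {f g : E → ℝ}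
  {m n : ℝ}

lemma StrongConvexOn.add (hf : StrongConvexOn s m f) (hg : StrongConvexOn s n g) :
    StrongConvexOn s (m + n) (f + g) := by
  have hφ : (fun r : ℝ ↦ (m + n) / 2 * r ^ 2)
      = (fun r ↦ m / 2 * r ^ 2) + fun r ↦ n / 2 * r ^ 2 := by
    funext r; simp only [Pi.add_apply]; ring
  unfold StrongConvexOn
  rw [hφ]
  exact UniformConvexOn.add hf hg

lemma StrongConvexOn.const_mul (hf : StrongConvexOn s m f) {a : ℝ} (ha : 0 ≤ a) :
    StrongConvexOn s (a * m) (fun x ↦ a * f x) := by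
  refine ⟨hf.1, fun x hx y hy p q hp hq hpq ↦ ?_⟩
  have := mul_le_mul_of_nonneg_left (hf.2 hx hy hp hq hpq) ha
  simp only [smul_eq_mul] at this ⊢
  linarith

lemma StrongConvexOn.comp_smul_add (hf : StrongConvexOn univ m f) (c : ℝ) (v : E) :
    StrongConvexOn univ (c ^ 2 * m) (fun x ↦ f (c • x + v)) := by
  refine ⟨convex_univ, fun x _ y _ a b ha hb hab ↦ ?_⟩
  have hcomb : c • (a • x + b • y) + v = a • (c • x + v) + b • (c • y + v) := by
    obtain rfl := eq_sub_of_add_eq hab; module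
  have hdist : ‖(c • x + v) - (c • y + v)‖ ^ 2 = c ^ 2 * ‖x - y‖ ^ 2 := by
    rw [add_sub_add_right_eq_sub, ← smul_sub, norm_smul, mul_pow, Real.norm_eq_abs, sq_abs]
  have := hf.2 (mem_univ (c • x + v)) (mem_univ (c • y + v)) ha hb hab
  simp only [hcomb, hdist] at this ⊢
  linarith

lemma StrongConvexOn.comp_sub_const (hf : StrongConvexOn univ m f) (u : E) :
    StrongConvexOn univ m (fun x ↦ f (x - u)) := by
  simpa [sub_eq_add_neg] using hf.comp_smul_add 1 (-u)

lemma StrongConvexOn.add_sq_le_of_isMinOn (hf : StrongConvexOn s m f) {x₀ y : E}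
    (hmin : IsMinOn f s x₀) (hx₀ : x₀ ∈ s) (hy : y ∈ s) :
    f x₀ + m / 2 * ‖y - x₀‖ ^ 2 ≤ f y := by
  have hseg : ∀ t ∈ Ioo (0 : ℝ) 1, f x₀ + (1 - t) * (m / 2 * ‖y - x₀‖ ^ 2) ≤ f y := by
    rintro t ⟨ht₀, ht₁⟩
    have hconv := hf.2 hy hx₀ ht₀.le (sub_nonneg.2 ht₁.le) (add_sub_cancel t 1)
    have hle : f x₀ ≤ f (t • y + (1 - t) • x₀) := hmin (hf.1 hy hx₀ ht₀.le (sub_nonneg.2 ht₁.le) (add_sub_cancel t 1))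
    simp only [smul_eq_mul] at hconv
    have : t * (f x₀ + (1 - t) * (m / 2 * ‖y - x₀‖ ^ 2)) ≤ t * f y := by linarith
    exact le_of_mul_le_mul_left this ht₀
  have hlim : Tendsto (fun t : ℝ ↦ f x₀ + (1 - t) * (m / 2 * ‖y - x₀‖ ^ 2)) (𝓝[>] 0)
      (𝓝 (f x₀ + m / 2 * ‖y - x₀‖ ^ 2)) := by
    have : Continuous (fun t : ℝ ↦ f x₀ + (1 - t) * (m / 2 * ‖y - x₀‖ ^ 2)) := by fun_prop
    simpa using (this.tendsto 0).mono_left nhdsWithin_le_nhds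
  exact le_of_tendsto hlim (eventually_of_mem (Ioo_mem_nhdsGT one_pos) hseg)

lemma StrongConvexOn.norm_sub_le_of_isMinOn {F₁ F₂ : E → ℝ} {η L : ℝ} {x₁ x₂ : E}
    (hη : 0 < η) (hL : 0 ≤ L) (h₁ : StrongConvexOn univ η F₁) (h₂ : StrongConvexOn univ η F₂)
    (hx₁ : IsMinOn F₁ univ x₁) (hx₂ : IsMinOn F₂ univ x₂)
    (hgap : ∀ x y, (F₁ x - F₂ x) - (F₁ y - F₂ y) ≤ L * ‖x - y‖) :
    ‖x₁ - x₂‖ ≤ L / η := by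
  have hgrow₁ := h₁.add_sq_le_of_isMinOn hx₁ (mem_univ _) (mem_univ x₂)
  have hgrow₂ := h₂.add_sq_le_of_isMinOn hx₂ (mem_univ _) (mem_univ x₁)
  have hsq : η * ‖x₁ - x₂‖ ^ 2 ≤ L * ‖x₁ - x₂‖ := by
    have hgap' := hgap x₂ x₁
    rw [norm_sub_rev x₂ x₁] at hgrow₁ hgap'
    linarith
  rw [le_div_iff₀ hη]
  rcases (norm_nonneg (x₁ - x₂)).eq_or_lt with h0 | hpos
  · rw [← h0, zero_mul]; exact hL
  · nlinarith

end StrongConvexity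

lemma strongConvexOn_univ_norm_sq {E : Type*} [NormedAddCommGroup E] [InnerProductSpace ℝ E] :
    StrongConvexOn univ 2 (fun x : E ↦ ‖x‖ ^ 2) := by
  rw [strongConvexOn_iff_convex]
  simpa using convexOn_const (0 : ℝ) (convex_univ : Convex ℝ (univ : Set E))

lemma norm_fderiv_sub_eq_norm_gradient_sub {F : Type*} [NormedAddCommGroup F]
    [InnerProductSpace ℝ F] [CompleteSpace F] (f : F → ℝ) (a b : F) :
    ‖fderiv ℝ f a - fderiv ℝ f b‖ = ‖gradient f a - gradient f b‖ := by
  rw [gradient, gradient, ← map_sub, LinearIsometryEquiv.norm_map]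

lemma norm_sub_comp_sub_sub_le {F : Type*} [NormedAddCommGroup F] [NormedSpace ℝ F]
    {f : F → ℝ} {ℓ : ℝ} (hf : Differentiable ℝ f)
    (hL : ∀ a b, ‖fderiv ℝ f a - fderiv ℝ f b‖ ≤ ℓ * ‖a - b‖) (u₁ u₂ x y : F) :
    ‖(f (x - u₁) - f (x - u₂)) - (f (y - u₁) - f (y - u₂))‖ ≤ ℓ * ‖u₁ - u₂‖ * ‖x - y‖ := by
  have hshift : ∀ u x, HasFDerivAt (fun x ↦ f (x - u)) (fderiv ℝ f (x - u)) x := fun u x ↦ by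
    simpa only [ContinuousLinearMap.comp_id, Function.comp_def, id] using
      (hf (x - u)).hasFDerivAt.comp x ((hasFDerivAt_id x).sub_const u)
  have hderiv : ∀ x, HasFDerivAt (fun x ↦ f (x - u₁) - f (x - u₂))
      (fderiv ℝ f (x - u₁) - fderiv ℝ f (x - u₂)) x := fun x ↦
    (hshift u₁ x).sub (hshift u₂ x)
  refine Convex.norm_image_sub_le_of_norm_fderiv_le (fun x _ ↦ (hderiv x).differentiableAt)
    (fun z _ ↦ ?_) convex_univ (mem_univ y) (mem_univ x)
  rw [(hderiv z).fderiv, norm_sub_rev u₁ u₂, ← sub_sub_sub_cancel_left u₁ u₂ z]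
  exact hL _ _

theorem stmt_18_general (d : ℕ) (f : EuclideanSpace ℝ (Fin d) → ℝ) (m ℓ lam₁ lam₂ : ℝ) (w : ℕ)
    (τ z h : EuclideanSpace ℝ (Fin d))
    (hm : 0 < m) (hlam₁ : 0 < lam₁) (hlam₂ : 0 < lam₂)
    (hdiff : Differentiable ℝ f)
    (hstrong : StrongConvexOn Set.univ m f)
    (hsmooth : ∀ a b, ‖gradient f a - gradient f b‖ ≤ ℓ * ‖a - b‖)
    (obj : EuclideanSpace ℝ (Fin d) → EuclideanSpace ℝ (Fin d) → ℝ)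
    (hobj : ∀ u xx, obj u xx =
      ‖((w : ℝ) + 1)⁻¹ • (xx + h) - τ‖ ^ 2 + lam₁ * f (xx - u) + lam₂ * ‖xx - z‖ ^ 2)
    (xmin : EuclideanSpace ℝ (Fin d) → EuclideanSpace ℝ (Fin d))
    (hxmin : ∀ u xx, obj u (xmin u) ≤ obj u xx)
    (η : ℝ) (hη : η = 2 / ((w : ℝ) + 1) ^ 2 + m * lam₁ + 2 * lam₂) :
    ∀ u₁ u₂, ‖xmin u₁ - xmin u₂‖ ≤ lam₁ * ℓ / η * ‖u₁ - u₂‖ := by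
  intro u₁ u₂
  have hconv : ∀ u, StrongConvexOn univ η (obj u) := fun u ↦ by
    have hfit := strongConvexOn_univ_norm_sq.comp_smul_add ((w : ℝ) + 1)⁻¹
      (((w : ℝ) + 1)⁻¹ • h - τ)
    have hreg := (hstrong.comp_sub_const u).const_mul hlam₁.le
    have hprox := (strongConvexOn_univ_norm_sq.comp_sub_const z).const_mul hlam₂.le
    have hobj_eq : obj u = (fun x ↦ ‖((w : ℝ) + 1)⁻¹ • x + (((w : ℝ) + 1)⁻¹ • h - τ)‖ ^ 2)
        + (fun x ↦ lam₁ * f (x - u)) + fun x ↦ lam₂ * ‖x - z‖ ^ 2 := by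
      funext x
      simp only [hobj, Pi.add_apply, smul_add, add_sub_assoc]
    have hη' : η = ((w : ℝ) + 1)⁻¹ ^ 2 * 2 + lam₁ * m + lam₂ * 2 := by
      rw [hη, inv_pow, div_eq_mul_inv]; ring
    rw [hobj_eq, hη']
    exact (hfit.add hreg).add hprox
  have hgap : ∀ x y, (obj u₁ x - obj u₂ x) - (obj u₁ y - obj u₂ y)
      ≤ lam₁ * (ℓ * ‖u₁ - u₂‖) * ‖x - y‖ := fun x y ↦ by
    have hlip := norm_sub_comp_sub_sub_le hdiff
      (fun a b ↦ (norm_fderiv_sub_eq_norm_gradient_sub f a b).trans_le (hsmooth a b)) u₁ u₂ x y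
    rw [Real.norm_eq_abs] at hlip
    calc (obj u₁ x - obj u₂ x) - (obj u₁ y - obj u₂ y)
        = lam₁ * ((f (x - u₁) - f (x - u₂)) - (f (y - u₁) - f (y - u₂))) := by
          simp only [hobj]; ring
      _ ≤ lam₁ * (ℓ * ‖u₁ - u₂‖ * ‖x - y‖) :=
          mul_le_mul_of_nonneg_left ((le_abs_self _).trans hlip) hlam₁.le
      _ = lam₁ * (ℓ * ‖u₁ - u₂‖) * ‖x - y‖ := by ring
  have hηpos : 0 < η := by rw [hη]; positivity
  have hL : 0 ≤ lam₁ * (ℓ * ‖u₁ - u₂‖) :=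
    mul_nonneg hlam₁.le ((norm_nonneg _).trans (hsmooth u₁ u₂))
  rw [div_mul_eq_mul_div, mul_assoc]
  exact (hconv u₁).norm_sub_le_of_isMinOn hηpos hL (hconv u₂) (fun x _ ↦ hxmin u₁ x)
    (fun x _ ↦ hxmin u₂ x) hgap

/-- the argmin map `u ↦ x(u)` (history fixed) is
`(λ₁ℓ/η)`-Lipschitz, `η = 2/(w+1)² + mλ₁ + 2λ₂`. -/
theorem stmt_18 (d : ℕ) (f : EuclideanSpace ℝ (Fin d) → ℝ) (m ℓ lam₁ lam₂ : ℝ) (w : ℕ)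
    (τ z h : EuclideanSpace ℝ (Fin d))
    (hm : 0 < m) (hℓ : 0 < ℓ) (hlam₁ : 0 < lam₁) (hlam₂ : 0 < lam₂)
    (hdiff : Differentiable ℝ f)
    (hstrong : StrongConvexOn Set.univ m f)
    (hsmooth : ∀ a b, ‖gradient f a - gradient f b‖ ≤ ℓ * ‖a - b‖)
    (hmin0 : ∀ x, f 0 ≤ f x) (hf0 : f 0 = 0)
    (obj : EuclideanSpace ℝ (Fin d) → EuclideanSpace ℝ (Fin d) → ℝ)
    (hobj : ∀ u xx, obj u xx =
      ‖((w : ℝ) + 1)⁻¹ • (xx + h) - τ‖ ^ 2 + lam₁ * f (xx - u) + lam₂ * ‖xx - z‖ ^ 2)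
    (xmin : EuclideanSpace ℝ (Fin d) → EuclideanSpace ℝ (Fin d))
    (hxmin : ∀ u xx, obj u (xmin u) ≤ obj u xx)
    (η : ℝ) (hη : η = 2 / ((w : ℝ) + 1) ^ 2 + m * lam₁ + 2 * lam₂) :
    ∀ u₁ u₂, ‖xmin u₁ - xmin u₂‖ ≤ lam₁ * ℓ / η * ‖u₁ - u₂‖ :=
  stmt_18_general d f m ℓ lam₁ lam₂ w τ z h hm hlam₁ hlam₂ hdiff hstrong hsmooth obj hobj xmin hxmin
    η hη
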